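/- arXiv:1305.4477 — 3 statements merged into one kernel-verified Lean document; each statement's English description precedes it below -/
import Mathlib

section
/- Let S ⊆ H_vector and V ⊆ H_scalar be finite-dimensional subspaces with div : S → V, and define the weak gradient wgrad : V → S by ⟨w, wgrad h⟩ = -⟨div w, h⟩ for all w ∈ S. Then for any f in the domain of the gradient operator satisfying the integration-by-parts identity ⟨w, ∇f⟩ = -⟨div w, f⟩ for all w ∈ S, one has wgrad(Π_V f) = Π_S(∇ f), where Π_V, Π_S are orthogonal projections onto V and S. -/
open scoped InnerProductSpace RealInnerProductSpace

theorem Submodule.eq_orthogonalProjectionOnto_of_forall_inner_eq {𝕜 E : Type*} [RCLike 𝕜]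
    [NormedAddCommGroup E] [InnerProductSpace 𝕜 E] {K : Submodule 𝕜 E}
    [K.HasOrthogonalProjection] {s : K} {x : E}
    (h : ∀ w : K, ⟪(w : E), (s : E)⟫_𝕜 = ⟪(w : E), x⟫_𝕜) :
    s = K.orthogonalProjectionOnto x := by
  refine Subtype.ext (K.eq_starProjection_of_mem_of_inner_eq_zero s.2 fun w hw => ?_).symm
  rw [inner_sub_left, ← inner_conj_symm, ← inner_conj_symm (s : E), h ⟨w, hw⟩, sub_self]

/-- The weak gradient commutes with L² projection: if ∇f = gf satisfies the
    integration-by-parts identity ⟨w, gf⟩ = -⟨div w, f⟩ for all w ∈ S, and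
    s ∈ S is the weak gradient of Π_V f, i.e. ⟨w, s⟩ = -⟨div w, Π_V f⟩ for all
    w ∈ S, then s = Π_S (∇ f). -/
theorem weak_grad_commutes_with_projection
    {Hs Hv : Type*}
    [NormedAddCommGroup Hs] [InnerProductSpace ℝ Hs]
    [NormedAddCommGroup Hv] [InnerProductSpace ℝ Hv]
    (V : Submodule ℝ Hs) (S : Submodule ℝ Hv)
    [FiniteDimensional ℝ V] [FiniteDimensional ℝ S]
    (dv : S →ₗ[ℝ] Hs)                           -- the map div : S → H_scalar
    (hdv : ∀ w : S, dv w ∈ V)                   -- div lands in V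
    (f : Hs) (gf : Hv)                          -- a scalar field and its gradient
    (hibp : ∀ w : S, ⟪(w : Hv), gf⟫ = -⟪dv w, f⟫)
    (s : S)                                     -- s = wgrad (Π_V f)
    (hs : ∀ w : S, ⟪(w : Hv), (s : Hv)⟫
        = -⟪dv w, ((V.orthogonalProjectionOnto f : V) : Hs)⟫) :
    s = S.orthogonalProjectionOnto gf := by
  refine S.eq_orthogonalProjectionOnto_of_forall_inner_eq fun w => ?_
  have hproj_invisible : ⟪dv w, ((V.orthogonalProjectionOnto f : V) : Hs)⟫ = ⟪dv w, f⟫ :=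
    V.inner_orthogonalProjectionOnto_eq_of_mem_left ⟨dv w, hdv w⟩ f
  rw [hs w, hproj_invisible, hibp w]
end

section
/- In the abstract mimetic setting, suppose ∇^⊥ : E → S satisfies div(∇^⊥ γ) = 0 in V for all γ ∈ E. If time-dependent elements u(t) ∈ S, h(t) ∈ V, q(t) ∈ E, F(t) ∈ S satisfy the discrete vorticity relation ⟨γ, q h⟩ = ⟨-∇^⊥γ, u⟩ + ⟨γ, f⟩ for all γ ∈ E (with f time-independent), and the discrete momentum equation ⟨w, ∂_t u⟩ + ⟨w, q F^⊥⟩ - ⟨div w, gh + |u|²/2⟩ = 0 for all w ∈ S, then ⟨γ, ∂_t(qh)⟩ + ⟨-∇^⊥γ, q F^⊥⟩ = 0 for all γ ∈ E. -/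
/-!
Differentiating the vorticity relation in time (the Coriolis term is constant) identifies
`⟨γ, ∂ₜ(qh)⟩` with `⟨-∇^⊥γ, ∂ₜu⟩`. Testing the momentum equation with `w = ∇^⊥γ`, whose
divergence vanishes, removes the Bernoulli term and gives `⟨∇^⊥γ, ∂ₜu⟩ = -⟨∇^⊥γ, qF^⊥⟩`.
-/

open MeasureTheory

def perp (w : ℝ × ℝ) : ℝ × ℝ := (-w.2, w.1)
def dotp (a b : ℝ × ℝ) : ℝ := a.1 * b.1 + a.2 * b.2

theorem HasDerivAt.unique_of_eq_add_const {φ ψ : ℝ → ℝ} {a b c t : ℝ}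
    (hφ : HasDerivAt φ a t) (hψ : HasDerivAt ψ b t) (h : ∀ s, φ s = ψ s + c) : a = b := by
  obtain rfl : φ = fun s => ψ s + c := funext h
  exact hφ.unique (hψ.add_const c)

theorem discrete_pv_flux_form_general
    {Ω : Type*} [MeasurableSpace Ω] (μ : Measure Ω)
    (E : Submodule ℝ (Ω → ℝ)) (S : Submodule ℝ (Ω → ℝ × ℝ))
    (sg : E →ₗ[ℝ] (Ω → ℝ × ℝ))                  -- ∇^⊥ : E → S
    (dv : S →ₗ[ℝ] (Ω → ℝ))                       -- div : S → V
    (hsgS : ∀ γ : E, sg γ ∈ S)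
    (hdivsg : ∀ γ : E, dv ⟨sg γ, hsgS γ⟩ = 0)    -- div ∘ ∇^⊥ = 0
    (g : ℝ) (f : Ω → ℝ)                          -- gravity, Coriolis (time-independent)
    (u F : ℝ → Ω → ℝ × ℝ) (h q : ℝ → Ω → ℝ)
    -- discrete vorticity relation: ⟨γ, qh⟩ = ⟨-∇^⊥γ, u⟩ + ⟨γ, f⟩
    (hvort : ∀ t (γ : E), ∫ x, (γ : Ω → ℝ) x * (q t x * h t x) ∂μ
        = (∫ x, -dotp (sg γ x) (u t x) ∂μ) + ∫ x, (γ : Ω → ℝ) x * f x ∂μ)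
    -- discrete momentum equation
    (hmom : ∀ t (w : S), (∫ x, dotp ((w : Ω → ℝ × ℝ) x) (deriv (fun s => u s x) t) ∂μ)
        + (∫ x, dotp ((w : Ω → ℝ × ℝ) x) (q t x • perp (F t x)) ∂μ)
        - (∫ x, dv w x * (g * h t x + dotp (u t x) (u t x) / 2) ∂μ) = 0)
    -- differentiation under the integral sign
    (hswap1 : ∀ (γ : E) t, HasDerivAt (fun s => ∫ x, -dotp (sg γ x) (u s x) ∂μ)
        (∫ x, -dotp (sg γ x) (deriv (fun s => u s x) t) ∂μ) t)
    (hswap2 : ∀ (γ : E) t, HasDerivAt (fun s => ∫ x, (γ : Ω → ℝ) x * (q s x * h s x) ∂μ)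
        (∫ x, (γ : Ω → ℝ) x * deriv (fun s => q s x * h s x) t ∂μ) t) :
    ∀ t (γ : E), (∫ x, (γ : Ω → ℝ) x * deriv (fun s => q s x * h s x) t ∂μ)
        + (∫ x, -dotp (sg γ x) (q t x • perp (F t x)) ∂μ) = 0 := by
  intro t γ
  have hvort_deriv := (hswap2 γ t).unique_of_eq_add_const (hswap1 γ t) (fun s => hvort s γ)
  have hmom_curl := hmom t ⟨sg γ, hsgS γ⟩
  simp only [hdivsg γ, Pi.zero_apply, zero_mul, integral_zero, sub_zero] at hmom_curl
  rw [hvort_deriv, integral_neg, integral_neg]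
  linarith

/-- Discrete potential vorticity flux form: in the mimetic finite element
    setting (div ∘ ∇^⊥ = 0), the discrete vorticity relation and the discrete
    momentum equation imply ⟨γ, ∂_t(qh)⟩ + ⟨-∇^⊥γ, qF^⊥⟩ = 0 for all γ ∈ E. -/
theorem discrete_pv_flux_form
    {Ω : Type*} [MeasurableSpace Ω] (μ : Measure Ω)
    (E V : Submodule ℝ (Ω → ℝ)) (S : Submodule ℝ (Ω → ℝ × ℝ))
    (sg : E →ₗ[ℝ] (Ω → ℝ × ℝ))                  -- ∇^⊥ : E → S
    (dv : S →ₗ[ℝ] (Ω → ℝ))                       -- div : S → V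
    (hsgS : ∀ γ : E, sg γ ∈ S)
    (hdvV : ∀ w : S, dv w ∈ V)
    (hdivsg : ∀ γ : E, dv ⟨sg γ, hsgS γ⟩ = 0)    -- div ∘ ∇^⊥ = 0
    (g : ℝ) (f : Ω → ℝ)                          -- gravity, Coriolis (time-independent)
    (u F : ℝ → Ω → ℝ × ℝ) (h q : ℝ → Ω → ℝ)
    (hu : ∀ t, u t ∈ S) (hF : ∀ t, F t ∈ S) (hh : ∀ t, h t ∈ V)
    -- discrete vorticity relation: ⟨γ, qh⟩ = ⟨-∇^⊥γ, u⟩ + ⟨γ, f⟩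
    (hvort : ∀ t (γ : E), ∫ x, (γ : Ω → ℝ) x * (q t x * h t x) ∂μ
        = (∫ x, -dotp (sg γ x) (u t x) ∂μ) + ∫ x, (γ : Ω → ℝ) x * f x ∂μ)
    -- discrete momentum equation
    (hmom : ∀ t (w : S), (∫ x, dotp ((w : Ω → ℝ × ℝ) x) (deriv (fun s => u s x) t) ∂μ)
        + (∫ x, dotp ((w : Ω → ℝ × ℝ) x) (q t x • perp (F t x)) ∂μ)
        - (∫ x, dv w x * (g * h t x + dotp (u t x) (u t x) / 2) ∂μ) = 0)
    -- differentiation under the integral sign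
    (hswap1 : ∀ (γ : E) t, HasDerivAt (fun s => ∫ x, -dotp (sg γ x) (u s x) ∂μ)
        (∫ x, -dotp (sg γ x) (deriv (fun s => u s x) t) ∂μ) t)
    (hswap2 : ∀ (γ : E) t, HasDerivAt (fun s => ∫ x, (γ : Ω → ℝ) x * (q s x * h s x) ∂μ)
        (∫ x, (γ : Ω → ℝ) x * deriv (fun s => q s x * h s x) t ∂μ) t) :
    ∀ t (γ : E), (∫ x, (γ : Ω → ℝ) x * deriv (fun s => q s x * h s x) t ∂μ)
        + (∫ x, -dotp (sg γ x) (q t x • perp (F t x)) ∂μ) = 0 :=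
  discrete_pv_flux_form_general μ E S sg dv hsgS hdivsg g f u F h q hvort hmom hswap1 hswap2
end

section
/- In the discrete finite element scheme, if the continuity equation ∂_t h + div F = 0 holds in V and the discrete PV equation ⟨γ, ∂_t(qh)⟩ + ⟨-∇γ, qF⟩ = 0 holds for all γ ∈ E, then taking γ = q ∈ E gives conservation of the discrete enstrophy: d/dt ⟨q, qh⟩ = 0, provided q is continuous across element boundaries and F is div-conforming so that ∫ ∇·(q²F) dA = 0. -/
open MeasureTheory

/-!
Since `∂ₜ(q²h) = 2q ∂ₜ(qh) - q² ∂ₜh`, the enstrophy rate is `2⟨q, ∂ₜ(qh)⟩ - ⟨q², ∂ₜh⟩`.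
Testing the PV equation with `γ = q` and integrating by parts turns the first term into
`⟨∇(q²), F⟩ = -⟨q², ∇·F⟩`, and the continuity equation turns the second into the same
quantity, so the two cancel.
-/

lemma dotp_smul_right (a b : ℝ × ℝ) (c : ℝ) : dotp a (c • b) = c * dotp a b := by
  simp only [dotp, Prod.smul_fst, Prod.smul_snd, smul_eq_mul]
  ring

lemma deriv_sq_mul_eq {𝕜 : Type*} [NontriviallyNormedField 𝕜] {a b : 𝕜 → 𝕜} {t : 𝕜}
    (ha : DifferentiableAt 𝕜 a t) (hb : DifferentiableAt 𝕜 b t) :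
    deriv (fun s => a s ^ 2 * b s) t
      = 2 * (a t * deriv (fun s => a s * b s) t) - a t ^ 2 * deriv b t := by
  rw [deriv_fun_mul ha hb, deriv_fun_mul (ha.fun_pow 2) hb, deriv_fun_pow ha]
  ring

/-- Discrete enstrophy conservation: if the continuity equation
    ∂_t h + ∇·F = 0 holds pointwise and the discrete PV equation
    ⟨γ, ∂_t(qh)⟩ = ⟨∇γ, qF⟩ holds for all γ ∈ E, then taking γ = q and using
    the integration-by-parts identity ⟨∇(q²), F⟩ = -⟨q², ∇·F⟩ (valid for
    continuous q and div-conforming F on a boundary-free domain) gives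
    d/dt ⟨q, qh⟩ = 0. -/
theorem discrete_enstrophy_conservation
    {Ω : Type*} [MeasurableSpace Ω] (μ : Measure Ω)
    (E : Submodule ℝ (Ω → ℝ))
    (gradE : E →ₗ[ℝ] (Ω → ℝ × ℝ))               -- gradient on the continuous space E
    (q h : ℝ → Ω → ℝ) (F : ℝ → Ω → ℝ × ℝ) (divF : ℝ → Ω → ℝ)
    (hq : ∀ t, q t ∈ E)
    (hqd : ∀ x t, DifferentiableAt ℝ (fun s => q s x) t)
    (hhd : ∀ x t, DifferentiableAt ℝ (fun s => h s x) t)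
    -- pointwise continuity equation ∂_t h + ∇·F = 0
    (hcont : ∀ t x, deriv (fun s => h s x) t + divF t x = 0)
    -- discrete PV equation ⟨γ, ∂_t(qh)⟩ = ⟨∇γ, qF⟩ for all γ ∈ E
    (hpv : ∀ t (γ : E), (∫ x, (γ : Ω → ℝ) x * deriv (fun s => q s x * h s x) t ∂μ)
        = ∫ x, dotp (gradE γ x) (q t x • F t x) ∂μ)
    -- integration by parts: ⟨∇(q²), F⟩ = -⟨q², ∇·F⟩
    (hibp : ∀ t, (∫ x, 2 * q t x * dotp (gradE ⟨q t, hq t⟩ x) (F t x) ∂μ)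
        = -∫ x, (q t x) ^ 2 * divF t x ∂μ)
    -- differentiation under the integral sign
    (hswap : ∀ t, HasDerivAt (fun s => ∫ x, (q s x) ^ 2 * h s x ∂μ)
        (∫ x, deriv (fun s => (q s x) ^ 2 * h s x) t ∂μ) t)
    -- integrability of the split integrands
    (hint1 : ∀ t, Integrable (fun x => q t x * deriv (fun s => q s x * h s x) t) μ)
    (hint2 : ∀ t, Integrable (fun x => (q t x) ^ 2 * deriv (fun s => h s x) t) μ) :
    ∀ t, HasDerivAt (fun s => ∫ x, (q s x) ^ 2 * h s x ∂μ) 0 t := by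
  intro t
  suffices hrate : ∫ x, deriv (fun s => (q s x) ^ 2 * h s x) t ∂μ = 0 from hrate ▸ hswap t
  have hpv_q : ∫ x, 2 * (q t x * deriv (fun s => q s x * h s x) t) ∂μ
      = -∫ x, q t x ^ 2 * divF t x ∂μ := by
    rw [integral_const_mul, hpv t ⟨q t, hq t⟩, ← hibp t, ← integral_const_mul]
    simp only [dotp_smul_right, mul_assoc]
  have hcont_q : ∫ x, q t x ^ 2 * deriv (fun s => h s x) t ∂μ
      = -∫ x, q t x ^ 2 * divF t x ∂μ := by
    rw [← integral_neg]
    congr with x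
    rw [eq_neg_of_add_eq_zero_left (hcont t x), mul_neg]
  calc ∫ x, deriv (fun s => (q s x) ^ 2 * h s x) t ∂μ
      = ∫ x, 2 * (q t x * deriv (fun s => q s x * h s x) t)
          - q t x ^ 2 * deriv (fun s => h s x) t ∂μ :=
        integral_congr_ae (.of_forall fun x => deriv_sq_mul_eq (hqd x t) (hhd x t))
    _ = ∫ x, 2 * (q t x * deriv (fun s => q s x * h s x) t) ∂μ
          - ∫ x, q t x ^ 2 * deriv (fun s => h s x) t ∂μ :=
        integral_sub ((hint1 t).const_mul 2) (hint2 t)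
    _ = 0 := by rw [hpv_q, hcont_q, sub_self]
end
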